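/- As formal power series in z and y (with q = zy), one has the identity 1/(1-y-z) = 1/((1-2P(q))(1 - z/(1-P(q)))) + P(q)/(z(1-2P(q))(1 - P(q)/z)), obtained by partial fraction decomposition of -z/((z-P(q))(z-(1-P(q)))), where P(q)=(1-√(1-4q))/2 satisfies P(1-P)=q. Moreover the first summand S⁺(z,y) contains exactly the monomials C(m1+m2,m1) z^{m1} y^{m2} with m1 ≥ m2 ≥ 0. -/

import Mathlib

/-!
Write `P = P(zy)` and `u = P(zy)/z`. The Catalan relation `P(1 - P) = zy` gives `z u = P` and
`u (1 - P) = y`, hence `1 - z - y = (1 - P - z)(1 - u)`, and partial fractions split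
`1/(1 - z - y)` as `S⁺ + S⁻` because `(1 - P)(1 - u) + u (1 - P - z) = 1 - 2P`.

Give `z^a y^b` the weight `a - b`. Then `S⁺` is obtained from `P` and `z`, both of weight `≥ 0`,
by ring operations and inversion, so all its monomials have `a ≥ b`; dually, `S⁻` is `u`, of
weight exactly `-1`, times inverses of series of weight `≤ 0`, so all its monomials have `a < b`.
The coefficients of `S⁺` on `a ≥ b` are therefore those of `1/(1 - z - y)`.
-/

/-- The shifted Catalan generating function
`P(q) = Σ_{n≥1} (1/n) C(2n-2, n-1) q^n`, satisfying `P(1-P) = q`. -/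
noncomputable def catalanShifted : PowerSeries ℚ :=
  PowerSeries.mk fun n => if n = 0 then 0 else (Nat.choose (2 * n - 2) (n - 1) : ℚ) / n

/-- The bivariate power series `P(z·y)`, variable `0` for `z`, variable `1` for `y`. -/
noncomputable def Pzy : MvPowerSeries (Fin 2) ℚ :=
  fun d => if d 0 = d 1 then PowerSeries.coeff (d 0) catalanShifted else 0

/-- The bivariate power series `P(z·y)/z` (a genuine power series, since the
coefficients of `P(z·y)` are supported on the diagonal). -/
noncomputable def Pzy_div_z : MvPowerSeries (Fin 2) ℚ :=
  fun d => if d 0 + 1 = d 1 then PowerSeries.coeff (d 1) catalanShifted else 0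

/-- `S⁺(z,y) = 1/((1-2P(zy))(1 - z/(1-P(zy))))`. -/
noncomputable def Splus : MvPowerSeries (Fin 2) ℚ :=
  ((1 - 2 * Pzy) * (1 - MvPowerSeries.X 0 * (1 - Pzy)⁻¹))⁻¹

/-- `S⁻(z,y) = P(zy)/(z(1-2P(zy))(1 - P(zy)/z))`. -/
noncomputable def Sminus : MvPowerSeries (Fin 2) ℚ :=
  Pzy_div_z * (1 - 2 * Pzy)⁻¹ * (1 - Pzy_div_z)⁻¹

/-- The bivariate power series `1/(1-y-z) = Σ_{i,j≥0} C(i+j,i) z^i y^j`. -/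
noncomputable def invOneSubYZ : MvPowerSeries (Fin 2) ℚ :=
  fun d => (Nat.choose (d 0 + d 1) (d 0) : ℚ)

namespace MvPowerSeries

variable {σ R k : Type*}

def WeightAtLeast [Semiring R] (w : (σ →₀ ℕ) →+ ℤ) (a : ℤ) (f : MvPowerSeries σ R) :
    Prop :=
  ∀ d, w d < a → coeff d f = 0

namespace WeightAtLeast

variable {w : (σ →₀ ℕ) →+ ℤ} {a b : ℤ}

section Semiring

variable [Semiring R] {f g : MvPowerSeries σ R}

theorem mono (hf : WeightAtLeast w b f) (hab : a ≤ b) : WeightAtLeast w a f :=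
  fun d hd => hf d (hd.trans_le hab)

theorem add (hf : WeightAtLeast w a f) (hg : WeightAtLeast w a g) :
    WeightAtLeast w a (f + g) := fun d hd => by rw [map_add, hf d hd, hg d hd, add_zero]

theorem mul (hf : WeightAtLeast w a f) (hg : WeightAtLeast w b g) :
    WeightAtLeast w (a + b) (f * g) := by
  classical
  intro d hd
  rw [coeff_mul]
  refine Finset.sum_eq_zero fun p hp => ?_
  rw [Finset.HasAntidiagonal.mem_antidiagonal] at hp
  rcases lt_or_ge (w p.1) a with h1 | h1
  · rw [hf _ h1, zero_mul]
  · rw [hg _ (by rw [← hp, map_add] at hd; omega), mul_zero]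

end Semiring

theorem sub [Ring R] {f g : MvPowerSeries σ R} (hf : WeightAtLeast w a f)
    (hg : WeightAtLeast w a g) : WeightAtLeast w a (f - g) :=
  fun d hd => by rw [map_sub, hf d hd, hg d hd, sub_zero]

theorem inv [Field k] {f : MvPowerSeries σ k} (hf : WeightAtLeast w 0 f) :
    WeightAtLeast w 0 f⁻¹ := by
  classical
  intro d
  induction d using WellFoundedLT.induction with
  | _ d ih =>
    intro hd
    have hd0 : d ≠ 0 := by rintro rfl; simp at hd
    rw [coeff_inv, if_neg hd0, Finset.sum_eq_zero, mul_zero]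
    intro p hp
    split_ifs with hlt
    · rw [Finset.HasAntidiagonal.mem_antidiagonal] at hp
      rcases lt_or_ge (w p.1) 0 with h1 | h1
      · rw [hf _ h1, zero_mul]
      · rw [ih _ hlt (by rw [← hp, map_add] at hd; omega), mul_zero]
    · rfl

end WeightAtLeast

theorem weightAtLeast_one [Semiring R] (w : (σ →₀ ℕ) →+ ℤ) :
    WeightAtLeast w 0 (1 : MvPowerSeries σ R) := by
  classical
  intro d hd
  rw [coeff_one, if_neg]
  rintro rfl
  simp at hd

theorem weightAtLeast_X [Semiring R] (w : (σ →₀ ℕ) →+ ℤ) (i : σ) :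
    WeightAtLeast w (w (Finsupp.single i 1)) (X i : MvPowerSeries σ R) := by
  classical
  intro d hd
  rw [coeff_X, if_neg]
  rintro rfl
  exact hd.false

end MvPowerSeries

namespace PowerSeries

theorem coeff_subst_X_zero_mul_X_one {R : Type*} [CommRing R] (f : R⟦X⟧)
    (e : Fin 2 →₀ ℕ) :
    MvPowerSeries.coeff e (subst (MvPowerSeries.X 0 * MvPowerSeries.X 1) f) =
      if e 0 = e 1 then coeff (e 0) f else 0 := by
  have hpow (n : ℕ) : (MvPowerSeries.X 0 * MvPowerSeries.X 1 : MvPowerSeries (Fin 2) R) ^ n =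
      MvPowerSeries.monomial (Finsupp.single 0 n + Finsupp.single 1 n) 1 := by
    rw [mul_pow, MvPowerSeries.X_pow_eq, MvPowerSeries.X_pow_eq,
      MvPowerSeries.monomial_mul_monomial, mul_one]
  rw [coeff_subst (HasSubst.of_constantCoeff_zero (by simp)), finsum_eq_single _ (e 0)]
  · simp_rw [hpow, MvPowerSeries.coeff_monomial, smul_eq_mul, mul_ite, mul_one, mul_zero]
    congr 1
    simp only [Finsupp.ext_iff, Fin.forall_fin_two]
    simp [eq_comm]
  · intro n hn
    rw [hpow, MvPowerSeries.coeff_monomial, if_neg, smul_zero]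
    rintro rfl
    simp at hn

end PowerSeries

open MvPowerSeries

theorem coeff_catalanShifted_succ (n : ℕ) :
    PowerSeries.coeff (n + 1) catalanShifted = catalan n := by
  have hchoose : (2 * (n + 1) - 2).choose (n + 1 - 1) = (n + 1) * catalan n := by
    rw [succ_mul_catalan_eq_centralBinom, Nat.centralBinom, show 2 * (n + 1) - 2 = 2 * n by omega,
      Nat.add_sub_cancel]
  rw [catalanShifted, PowerSeries.coeff_mk, if_neg n.succ_ne_zero, hchoose]
  push_cast
  field_simp

theorem catalanShifted_eq_X_mul : catalanShifted =
    PowerSeries.X * PowerSeries.map (Nat.castRingHom ℚ) PowerSeries.catalanSeries := by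
  ext (_ | n)
  · simp [catalanShifted]
  · rw [coeff_catalanShifted_succ, mul_comm, PowerSeries.coeff_succ_mul_X]
    simp

theorem catalanShifted_mul_one_sub : catalanShifted * (1 - catalanShifted) = PowerSeries.X := by
  set C := PowerSeries.map (Nat.castRingHom ℚ) PowerSeries.catalanSeries
  have hC : C ^ 2 * PowerSeries.X + 1 = C := by
    simpa using congrArg (PowerSeries.map (Nat.castRingHom ℚ))
      PowerSeries.catalanSeries_sq_mul_X_add_one
  rw [catalanShifted_eq_X_mul]
  linear_combination (-PowerSeries.X) * hC

theorem coeff_Pzy (d : Fin 2 →₀ ℕ) :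
    coeff d Pzy = if d 0 = d 1 then PowerSeries.coeff (d 0) catalanShifted else 0 := rfl

theorem coeff_Pzy_div_z (d : Fin 2 →₀ ℕ) :
    coeff d Pzy_div_z = if d 0 + 1 = d 1 then PowerSeries.coeff (d 1) catalanShifted else 0 := rfl

theorem coeff_invOneSubYZ (d : Fin 2 →₀ ℕ) :
    coeff d invOneSubYZ = (d 0 + d 1).choose (d 0) := rfl

theorem Pzy_eq_subst : Pzy = PowerSeries.subst (X 0 * X 1) catalanShifted := by
  ext d
  rw [PowerSeries.coeff_subst_X_zero_mul_X_one]
  rfl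

theorem invOneSubYZ_eq_subst :
    invOneSubYZ = PowerSeries.subst (X 0 + X 1) (PowerSeries.mk (1 : ℕ → ℚ)) := by
  ext d
  rw [PowerSeries.coeff_subst_X_zero_add_X_one, PowerSeries.coeff_mk, Pi.one_apply, mul_one,
    coeff_invOneSubYZ]

theorem Pzy_mul_one_sub_Pzy : Pzy * (1 - Pzy) = X 0 * X 1 := by
  have ha : PowerSeries.HasSubst (X 0 * X 1 : MvPowerSeries (Fin 2) ℚ) :=
    .of_constantCoeff_zero (by simp)
  simpa [Pzy_eq_subst, ← PowerSeries.coe_substAlgHom ha, PowerSeries.substAlgHom_X] using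
    congrArg (PowerSeries.substAlgHom ha) catalanShifted_mul_one_sub

theorem invOneSubYZ_mul : invOneSubYZ * (1 - (X 0 + X 1)) = 1 := by
  have ha : PowerSeries.HasSubst (X 0 + X 1 : MvPowerSeries (Fin 2) ℚ) :=
    .of_constantCoeff_zero (by simp)
  simpa [invOneSubYZ_eq_subst, ← PowerSeries.coe_substAlgHom ha, PowerSeries.substAlgHom_X] using
    congrArg (PowerSeries.substAlgHom ha) (PowerSeries.mk_one_mul_one_sub_eq_one ℚ)

theorem X_zero_mul_Pzy_div_z : X 0 * Pzy_div_z = Pzy := by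
  ext d
  rw [X, coeff_monomial_mul, coeff_Pzy]
  split_ifs <;> simp_all [coeff_Pzy_div_z, Finsupp.single_le_iff, catalanShifted]

theorem Pzy_div_z_mul_one_sub_Pzy : Pzy_div_z * (1 - Pzy) = X 1 := by
  have hz : (X 0 : MvPowerSeries (Fin 2) ℚ) ≠ 0 :=
    ne_of_apply_ne (coeff (Finsupp.single 0 1)) (by simp)
  refine mul_left_cancel₀ hz ?_
  rw [← mul_assoc, X_zero_mul_Pzy_div_z, Pzy_mul_one_sub_Pzy]

theorem constantCoeff_Pzy : constantCoeff Pzy = 0 := by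
  simp [← coeff_zero_eq_constantCoeff_apply, coeff_Pzy, catalanShifted]

theorem constantCoeff_Pzy_div_z : constantCoeff Pzy_div_z = 0 := by
  simp [← coeff_zero_eq_constantCoeff_apply, coeff_Pzy_div_z]

theorem Splus_add_Sminus_mul : (Splus + Sminus) * (1 - (X 0 + X 1)) = 1 := by
  set P := Pzy
  set u := Pzy_div_z
  have hA : (1 - 2 * P) * (1 - 2 * P)⁻¹ = 1 :=
    MvPowerSeries.mul_inv_cancel _ (by simp [P, constantCoeff_Pzy])
  have hB : (1 - P) * (1 - P)⁻¹ = 1 :=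
    MvPowerSeries.mul_inv_cancel _ (by simp [P, constantCoeff_Pzy])
  have hF : (1 - u)⁻¹ * (1 - u) = 1 :=
    MvPowerSeries.inv_mul_cancel _ (by simp [u, constantCoeff_Pzy_div_z])
  have hS : Splus * ((1 - 2 * P) * (1 - X 0 * (1 - P)⁻¹)) = 1 :=
    MvPowerSeries.inv_mul_cancel _ (by simp [constantCoeff_Pzy])
  have hzu : X 0 * u = P := X_zero_mul_Pzy_div_z
  have huy : u * (1 - P) = X 1 := Pzy_div_z_mul_one_sub_Pzy
  have hfactor : 1 - (X 0 + X 1) = (1 - P - X 0) * (1 - u) := by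
    linear_combination huy - hzu
  have hplus : Splus * (1 - P - X 0) = (1 - P) * (1 - 2 * P)⁻¹ := by
    linear_combination ((1 - P) * (1 - 2 * P)⁻¹) * hS
      - Splus * (1 - P - X 0 * (1 - P) * (1 - P)⁻¹) * hA + Splus * X 0 * hB
  have hminus : Sminus * (1 - u) = u * (1 - 2 * P)⁻¹ := by
    rw [Sminus, mul_assoc, hF, mul_one]
  have hnumerator : (1 - P) * (1 - u) + u * (1 - P - X 0) = 1 - 2 * P := by
    linear_combination -hzu
  calc (Splus + Sminus) * (1 - (X 0 + X 1))
      = ((1 - P) * (1 - u) + u * (1 - P - X 0)) * (1 - 2 * P)⁻¹ := by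
        rw [hfactor]
        linear_combination (1 - u) * hplus + (1 - P - X 0) * hminus
    _ = 1 := by rw [hnumerator, hA]

theorem Splus_add_Sminus : Splus + Sminus = invOneSubYZ := by
  calc Splus + Sminus = (Splus + Sminus) * ((1 - (X 0 + X 1)) * invOneSubYZ) := by
        rw [mul_comm (1 - _), invOneSubYZ_mul, mul_one]
    _ = invOneSubYZ := by rw [← mul_assoc, Splus_add_Sminus_mul, one_mul]

def zyWeight : (Fin 2 →₀ ℕ) →+ ℤ where
  toFun d := d 0 - d 1
  map_zero' := by simp
  map_add' a b := by simp; ring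

theorem zyWeight_apply (d : Fin 2 →₀ ℕ) : zyWeight d = d 0 - d 1 := rfl

theorem weightAtLeast_Pzy : WeightAtLeast zyWeight 0 Pzy := fun d hd => by
  rw [coeff_Pzy, if_neg (by rw [zyWeight_apply] at hd; omega)]

theorem weightAtLeast_neg_Pzy : WeightAtLeast (-zyWeight) 0 Pzy := fun d hd => by
  rw [coeff_Pzy, if_neg (by rw [AddMonoidHom.neg_apply, zyWeight_apply] at hd; omega)]

theorem weightAtLeast_neg_Pzy_div_z : WeightAtLeast (-zyWeight) 1 Pzy_div_z := fun d hd => by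
  rw [coeff_Pzy_div_z, if_neg (by rw [AddMonoidHom.neg_apply, zyWeight_apply] at hd; omega)]

theorem weightAtLeast_Splus : WeightAtLeast zyWeight 0 Splus := by
  have hP := weightAtLeast_Pzy
  have hz : WeightAtLeast zyWeight 0 (X 0 : MvPowerSeries (Fin 2) ℚ) :=
    (weightAtLeast_X _ 0).mono (by simp [zyWeight_apply])
  have hA := (weightAtLeast_one zyWeight).sub (two_mul Pzy ▸ hP.add hP)
  have hE := (weightAtLeast_one zyWeight).sub (hz.mul ((weightAtLeast_one zyWeight).sub hP).inv)
  exact (hA.mul hE).inv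

theorem weightAtLeast_Sminus : WeightAtLeast (-zyWeight) 1 Sminus := by
  have hP := weightAtLeast_neg_Pzy
  have hu := weightAtLeast_neg_Pzy_div_z
  have hA := (weightAtLeast_one (-zyWeight)).sub (two_mul Pzy ▸ hP.add hP)
  have hF := (weightAtLeast_one (-zyWeight)).sub (hu.mono zero_le_one)
  exact (hu.mul hA.inv).mul hF.inv

theorem stmt_8 :
    Splus + Sminus = invOneSubYZ ∧
    ∀ m1 m2 : ℕ,
      MvPowerSeries.coeff (Finsupp.single 0 m1 + Finsupp.single 1 m2) Splus
        = if m2 ≤ m1 then (Nat.choose (m1 + m2) m1 : ℚ) else 0 := by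
  refine ⟨Splus_add_Sminus, fun m1 m2 => ?_⟩
  set d : Fin 2 →₀ ℕ := Finsupp.single 0 m1 + Finsupp.single 1 m2
  have hd : zyWeight d = m1 - m2 := by simp [d, zyWeight_apply]
  split_ifs with h
  · have hminus : coeff d Sminus = 0 :=
      weightAtLeast_Sminus d (by rw [AddMonoidHom.neg_apply, hd]; omega)
    rw [← add_zero (coeff d Splus), ← hminus, ← map_add, Splus_add_Sminus, coeff_invOneSubYZ]
    simp [d]
  · exact weightAtLeast_Splus d (by rw [hd]; omega)
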